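/- Let S be a cancellative monoid which admits at least one left-Følner net (equivalently, S is a cancellative left-amenable monoid). Let h be a real-valued function on the set of finite subsets of S which is subadditive (h(A ∪ B) ≤ h(A) + h(B) for all finite A, B ⊆ S) and right-subinvariant (h(As) ≤ h(A) for all s ∈ S and all finite A ⊆ S). Then there exists a real number λ ≥ 0, depending only on h, such that for every left-Følner net (F_i)_{i∈I} of S, the net (h(F_i)/|F_i|)_{i∈I} converges to λ. -/

import Mathlib

open Filter

/-- A left-Følner net for a (multiplicative) structure `S`: a net, indexed by a nonempty
directed set `I`, of nonempty finite subsets `F i` of `S` such that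
`|s F_i \ F_i| / |F_i| → 0` for every `s ∈ S`. -/
structure LeftFolnerNet.{u, v} (S : Type u) [Mul S] [DecidableEq S] :
    Type (max u (v + 1)) where
  I : Type v
  [pre : Preorder I]
  [ne : Nonempty I]
  dir : IsDirected I (· ≤ ·)
  F : I → Finset S
  nonempty : ∀ i, (F i).Nonempty
  folner : ∀ s : S,
    Filter.Tendsto (fun i => ((((F i).image (s * ·)) \ F i).card : ℝ) / ((F i).card : ℝ))
      Filter.atTop (nhds 0)

attribute [instance] LeftFolnerNet.pre LeftFolnerNet.ne

/-! The Ornstein–Weiss quasi-tiling argument. Let `A` be the liminf of `h (M_i) / |M_i|` along a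
Følner net `M` and let `ε > 0` be small. Sets `M_i` with `h (M_i) ≤ (A + ε) |M_i|` form a tower
`K_n, …, K_1`, each far more invariant than the ones chosen before it. A finite set `F` that is
invariant enough, such as `N_i` for large `i` along any Følner net `N`, is `ε`-quasi-tiled by right
translates `K_j t`, tiling greedily from the most invariant `K_n` down: each tile covers a further
`ε² / 2` of `F` until less than `ε |F|` is left. Subadditivity and right subinvariance bound `h` on
the tiles by `A + ε` times their total size, at most `|F| / (1 - ε)`, and on the rest by `h {1}` per
point. Hence `limsup h (N_i) / |N_i| ≤ liminf h (M_i) / |M_i|` for any two Følner nets, and all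
these ratios converge to a common limit. -/

open Finset

namespace OrnsteinWeiss

variable {S : Type*}

section Mul

variable [Mul S] [DecidableEq S]

structure IsSubadditiveRightSubinvariant (h : Finset S → ℝ) : Prop where
  map_empty : h ∅ = 0
  map_union_le (A B : Finset S) : h (A ∪ B) ≤ h A + h B
  map_image_mul_right_le (s : S) (A : Finset S) : h (A.image (· * s)) ≤ h A

def leftBoundary (k : S) (A : Finset S) : Finset S := A.image (k * ·) \ A

theorem isSubadditiveRightSubinvariant_ite {h : Finset S → ℝ}
    (hunion : ∀ A B : Finset S, h (A ∪ B) ≤ h A + h B)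
    (himage : ∀ (s : S) (A : Finset S), h (A.image (· * s)) ≤ h A) :
    IsSubadditiveRightSubinvariant fun A => if A = ∅ then 0 else h A := by
  refine ⟨if_pos rfl, fun A B => ?_, fun s A => ?_⟩
  · by_cases hA : A = ∅ <;> by_cases hB : B = ∅ <;> simp [hA, hB, hunion]
  · by_cases hA : A = ∅ <;> simp [hA, himage]

namespace IsSubadditiveRightSubinvariant

variable {h : Finset S → ℝ}

theorem nonneg (hh : IsSubadditiveRightSubinvariant h) (A : Finset S) : 0 ≤ h A := by
  linarith [union_self A ▸ hh.map_union_le A A]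

theorem map_biUnion_le (hh : IsSubadditiveRightSubinvariant h) {ι : Type*} (C : Finset ι)
    (f : ι → Finset S) : h (C.biUnion f) ≤ ∑ c ∈ C, h (f c) := by
  classical
  induction C using Finset.induction_on with
  | empty => simp [hh.map_empty]
  | insert a C ha ih =>
    rw [biUnion_insert, sum_insert ha]
    linarith [hh.map_union_le (f a) (C.biUnion f)]

end IsSubadditiveRightSubinvariant

/-- A list of tiles, placed from head to tail. Each tile is almost invariant under the elements of
the tiles after it, so that its translates barely increase the number of points that those
elements move into the tiled part. -/
inductive IsTower (h : Finset S → ℝ) (ε μ : ℝ) : List (Finset S) → Prop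
  | nil : IsTower h ε μ []
  | cons {K : Finset S} {L : List (Finset S)} (hK : K.Nonempty) (hhK : h K ≤ μ * #K)
      (hKL : ∀ K' ∈ L, ∀ k ∈ K', #(leftBoundary k K) ≤ ε ^ 2 * (1 - ε) / (4 * #K') * #K)
      (hL : IsTower h ε μ L) : IsTower h ε μ (K :: L)

/-- `D ⊆ F` stands for a union of right translates of tiles whose sizes add up to `M`; `L` lists
the tiles still to be placed. -/
structure IsPartialQuasiTiling (h : Finset S → ℝ) (ε μ : ℝ) (L : List (Finset S))
    (F D : Finset S) (M : ℝ) : Prop where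
  subset : D ⊆ F
  mass_nonneg : 0 ≤ M
  card_ge : (1 - ε) * M ≤ #D
  map_le_mul : h D ≤ μ * M
  card_entering_le : ∀ K ∈ L, ∀ k ∈ K,
    #{s ∈ F | k * s ∈ D ∧ s ∉ D} ≤ ε ^ 2 * (1 - ε) / (4 * #K) * M

namespace IsPartialQuasiTiling

variable {h : Finset S → ℝ} {ε μ M : ℝ} {F D : Finset S} {L : List (Finset S)}

theorem empty (hh : IsSubadditiveRightSubinvariant h) : IsPartialQuasiTiling h ε μ L F ∅ 0 :=
  ⟨empty_subset F, le_rfl, by simp, by simp [hh.map_empty], by simp⟩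

theorem nil (hD : IsPartialQuasiTiling h ε μ L F D M) : IsPartialQuasiTiling h ε μ [] F D M :=
  { hD with card_entering_le := by simp }

end IsPartialQuasiTiling

theorem IsTower.nonempty_of_mem {h : Finset S → ℝ} {ε μ : ℝ} {L : List (Finset S)}
    (hL : IsTower h ε μ L) {K : Finset S} (hK : K ∈ L) : K.Nonempty := by
  induction hL with
  | nil => simp at hK
  | cons hK' _ _ _ ih => exact (List.mem_cons.1 hK).elim (· ▸ hK') ih

end Mul

section Monoid

variable [Monoid S] [DecidableEq S]

theorem IsSubadditiveRightSubinvariant.map_le_mul_card {h : Finset S → ℝ}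
    (hh : IsSubadditiveRightSubinvariant h) (A : Finset S) : h A ≤ h {1} * #A := by
  calc h A = h (A.biUnion singleton) := by rw [biUnion_singleton_eq_self]
    _ ≤ ∑ a ∈ A, h {a} := hh.map_biUnion_le A singleton
    _ ≤ ∑ _a ∈ A, h {1} := sum_le_sum fun a _ => by
        simpa using hh.map_image_mul_right_le a {1}
    _ = h {1} * #A := by rw [sum_const, nsmul_eq_mul, mul_comm]

end Monoid

variable [CancelMonoid S] [DecidableEq S]

theorem card_image_mul_left (k : S) (A : Finset S) : #(A.image (k * ·)) = #A :=
  card_image_of_injective _ (mul_right_injective k)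

theorem card_image_mul_right (t : S) (A : Finset S) : #(A.image (· * t)) = #A :=
  card_image_of_injective _ (mul_left_injective t)

theorem card_filter_mul_notMem_le (k : S) (F : Finset S) :
    #{s ∈ F | k * s ∉ F} ≤ #(leftBoundary k F) :=
  card_le_card_of_injOn (k * ·)
    (fun s hs => by simp_all [leftBoundary])
    (mul_right_injective k).injOn

/-- Points of `W` moved into `B` from outside inject, under `k * ·`, into `B \ kB`, which has the
same size as `kB \ B`. -/
theorem card_filter_entering_le (k : S) (W B : Finset S) :
    #{s ∈ W | k * s ∈ B ∧ s ∉ B} ≤ #(leftBoundary k B) := by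
  rw [leftBoundary, card_sdiff_comm (card_image_mul_left k B)]
  exact card_le_card_of_injOn (k * ·) (fun s hs => by simp_all) (mul_right_injective k).injOn

theorem card_leftBoundary_image_mul_right (k t : S) (K : Finset S) :
    #(leftBoundary k (K.image (· * t))) = #(leftBoundary k K) := by
  have hcomm : (K.image (· * t)).image (k * ·) = (K.image (k * ·)).image (· * t) := by
    simp only [image_image, Function.comp_def, mul_assoc]
  rw [leftBoundary, hcomm, ← image_sdiff _ _ (mul_left_injective t),
    card_image_mul_right, leftBoundary]

theorem card_filter_mem_image_mul_right_le (K T : Finset S) (x : S) :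
    #{t ∈ T | x ∈ K.image (· * t)} ≤ #K :=
  card_le_card_of_forall_subsingleton (fun t k => k * t = x)
    (fun t ht => by simpa using (mem_filter.1 ht).2)
    (fun _ _ _ ht₁ _ ht₂ => mul_left_cancel (ht₁.2.trans ht₂.2.symm))

/-- Take a maximal `C ⊆ T` whose translates `Kt` are `ε`-disjoint in total. By maximality every
`Kt` with `t ∈ T` meets their union in more than `ε |K|` points, and double counting turns this
into `ε |T| ≤ |⋃ Kt|`. -/
theorem exists_subset_card_biUnion_ge (K T : Finset S) (hK : K.Nonempty) {ε : ℝ}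
    (hε1 : ε < 1) :
    ∃ C ⊆ T, (1 - ε) * (#C * #K) ≤ #(C.biUnion fun t => K.image (· * t)) ∧
      ε * #T ≤ #(C.biUnion fun t => K.image (· * t)) := by
  set tiles : Finset S → Finset S := fun C => C.biUnion fun t => K.image (· * t)
  obtain ⟨C, hC, hmax⟩ := exists_max_image
    {C ∈ T.powerset | (1 - ε) * (#C * #K) ≤ (#(tiles C) : ℝ)} card ⟨∅, by simp [tiles]⟩
  rw [mem_filter, mem_powerset] at hC
  refine ⟨C, hC.1, hC.2, ?_⟩
  have hKpos : (0 : ℝ) < #K := by exact_mod_cast hK.card_pos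
  have hmeet : ∀ t ∈ T, ε * #K ≤ (#{x ∈ tiles C | x ∈ K.image (· * t)} : ℝ) := by
    intro t ht
    rw [filter_mem_eq_inter, inter_comm]
    by_contra! hlt
    have htC : t ∉ C := fun htC => by
      have hsub : K.image (· * t) ⊆ tiles C :=
        subset_biUnion_of_mem (fun t => K.image (· * t)) htC
      rw [inter_eq_left.2 hsub, card_image_mul_right] at hlt
      nlinarith
    have hunion : tiles (insert t C) = K.image (· * t) ∪ tiles C := biUnion_insert
    have hcard :
        (#(tiles (insert t C)) : ℝ) + #(K.image (· * t) ∩ tiles C) = #K + #(tiles C) := by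
      rw [hunion, ← card_image_mul_right t K]
      exact_mod_cast card_union_add_card_inter _ _
    have hins := hmax (insert t C) (by
      rw [mem_filter, mem_powerset, card_insert_of_notMem htC]
      refine ⟨insert_subset ht hC.1, ?_⟩
      push_cast
      nlinarith [hC.2])
    rw [card_insert_of_notMem htC] at hins
    omega
  have hcount := card_nsmul_le_card_nsmul (fun t x => x ∈ K.image (· * t)) hmeet
    (n := (#K : ℝ)) fun x _ => Nat.cast_le.2 (card_filter_mem_image_mul_right_le K T x)
  rw [nsmul_eq_mul, nsmul_eq_mul] at hcount
  nlinarith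

theorem card_sdiff_filter_le (K F D : Finset S) :
    #((F \ D) \ {s ∈ F \ D | ∀ k ∈ K, k * s ∈ F \ D}) ≤
      ∑ k ∈ K, (#(leftBoundary k F) + #{s ∈ F | k * s ∈ D ∧ s ∉ D}) := by
  calc
    _ ≤ #(K.biUnion fun k =>
          {s ∈ F | k * s ∉ F} ∪ {s ∈ F | k * s ∈ D ∧ s ∉ D}) := by
        refine card_le_card fun s hs => ?_
        rw [Finset.mem_sdiff, mem_filter] at hs
        obtain ⟨k, hk, hks⟩ : ∃ k ∈ K, k * s ∉ F \ D := by
          by_contra! hall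
          exact hs.2 ⟨hs.1, hall⟩
        obtain ⟨hsF, hsD⟩ := Finset.mem_sdiff.1 hs.1
        simp only [mem_biUnion, mem_union, mem_filter]
        by_cases hkF : k * s ∈ F
        · exact ⟨k, hk, Or.inr ⟨hsF, by simpa [hkF] using hks, hsD⟩⟩
        · exact ⟨k, hk, Or.inl ⟨hsF, hkF⟩⟩
    _ ≤ ∑ k ∈ K, #({s ∈ F | k * s ∉ F} ∪ {s ∈ F | k * s ∈ D ∧ s ∉ D}) :=
        card_biUnion_le
    _ ≤ _ := sum_le_sum fun k _ =>
        (card_union_le _ _).trans (Nat.add_le_add_right (card_filter_mul_notMem_le k F) _)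

theorem card_filter_entering_union_biUnion_le (k : S) (F D K C : Finset S) :
    #{s ∈ F | k * s ∈ D ∪ C.biUnion (fun t => K.image (· * t)) ∧
        s ∉ D ∪ C.biUnion (fun t => K.image (· * t))} ≤
      #{s ∈ F | k * s ∈ D ∧ s ∉ D} + #C * #(leftBoundary k K) := by
  calc
    _ ≤ #({s ∈ F | k * s ∈ D ∧ s ∉ D} ∪ C.biUnion fun t =>
          {s ∈ F | k * s ∈ K.image (· * t) ∧ s ∉ K.image (· * t)}) := by
        refine card_le_card fun s hs => ?_
        simp only [mem_filter, mem_union, mem_biUnion, not_or, not_exists, not_and] at hs ⊢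
        obtain ⟨hsF, hks | ⟨t, ht, hkst⟩, hsD, hsE⟩ := hs
        · exact Or.inl ⟨hsF, hks, hsD⟩
        · exact Or.inr ⟨t, ht, hsF, hkst, hsE t ht⟩
    _ ≤ #{s ∈ F | k * s ∈ D ∧ s ∉ D} +
          ∑ t ∈ C, #{s ∈ F | k * s ∈ K.image (· * t) ∧ s ∉ K.image (· * t)} :=
        (card_union_le _ _).trans (Nat.add_le_add_left card_biUnion_le _)
    _ ≤ #{s ∈ F | k * s ∈ D ∧ s ∉ D} + ∑ _t ∈ C, #(leftBoundary k K) := by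
        refine Nat.add_le_add_left (sum_le_sum fun t _ => ?_) _
        exact (card_filter_entering_le k F _).trans_eq (card_leftBoundary_image_mul_right k t K)
    _ = _ := by rw [sum_const, smul_eq_mul]

namespace IsPartialQuasiTiling

variable {h : Finset S → ℝ} {ε μ M : ℝ} {K F D : Finset S} {L : List (Finset S)}

theorem card_centers_ge (hD : IsPartialQuasiTiling h ε μ (K :: L) F D M) (hK : K.Nonempty)
    (hFK : ∀ k ∈ K, #(leftBoundary k F) ≤ ε ^ 2 / (4 * #K) * #F) :
    #(F \ D) - ε ^ 2 / 2 * #F ≤ #{s ∈ F \ D | ∀ k ∈ K, k * s ∈ F \ D} := by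
  set T := {s ∈ F \ D | ∀ k ∈ K, k * s ∈ F \ D}
  have hKpos : (0 : ℝ) < #K := by exact_mod_cast hK.card_pos
  have hMF : (1 - ε) * M ≤ #F := hD.card_ge.trans (by exact_mod_cast card_le_card hD.subset)
  have hbad : (#((F \ D) \ T) : ℝ) ≤ ε ^ 2 / 2 * #F := calc
    (#((F \ D) \ T) : ℝ)
      ≤ ∑ k ∈ K, ((#(leftBoundary k F) : ℝ) + #{s ∈ F | k * s ∈ D ∧ s ∉ D}) := by
        exact_mod_cast card_sdiff_filter_le K F D
    _ ≤ ∑ _k ∈ K, (ε ^ 2 / (4 * #K) * #F + ε ^ 2 * (1 - ε) / (4 * #K) * M) :=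
        sum_le_sum fun k hk => add_le_add (hFK k hk) (hD.card_entering_le K List.mem_cons_self k hk)
    _ = ε ^ 2 / 4 * (#F + (1 - ε) * M) := by
        rw [sum_const, nsmul_eq_mul]; field_simp
    _ ≤ ε ^ 2 / 2 * #F := by nlinarith
  have hsplit : (#((F \ D) \ T) : ℝ) + #T = #(F \ D) := by
    exact_mod_cast card_sdiff_add_card_eq_card (filter_subset _ _)
  linarith

theorem union_biUnion (hh : IsSubadditiveRightSubinvariant h)
    (hD : IsPartialQuasiTiling h ε μ (K :: L) F D M) (hhK : h K ≤ μ * #K)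
    (hKL : ∀ K' ∈ L, ∀ k ∈ K', #(leftBoundary k K) ≤ ε ^ 2 * (1 - ε) / (4 * #K') * #K)
    {C : Finset S} (hCF : (C.biUnion fun t => K.image (· * t)) ⊆ F \ D)
    (hC : (1 - ε) * (#C * #K) ≤ #(C.biUnion fun t => K.image (· * t))) :
    IsPartialQuasiTiling h ε μ L F (D ∪ C.biUnion fun t => K.image (· * t)) (M + #C * #K) where
  subset := union_subset hD.subset (hCF.trans sdiff_subset)
  mass_nonneg := by have := hD.mass_nonneg; positivity
  card_ge := by
    rw [card_union_of_disjoint (disjoint_of_subset_right hCF disjoint_sdiff)]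
    push_cast
    linarith [hD.card_ge]
  map_le_mul := calc
    _ ≤ h D + h (C.biUnion fun t => K.image (· * t)) := hh.map_union_le _ _
    _ ≤ μ * M + ∑ t ∈ C, h (K.image (· * t)) :=
        add_le_add hD.map_le_mul (hh.map_biUnion_le _ _)
    _ ≤ μ * M + ∑ _t ∈ C, μ * #K := by
        gcongr with t
        exact (hh.map_image_mul_right_le t K).trans hhK
    _ = μ * (M + #C * #K) := by rw [sum_const, nsmul_eq_mul]; ring
  card_entering_le K' hK' k hk := calc
    _ ≤ (#{s ∈ F | k * s ∈ D ∧ s ∉ D} : ℝ) + #C * #(leftBoundary k K) := by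
        exact_mod_cast card_filter_entering_union_biUnion_le k F D K C
    _ ≤ ε ^ 2 * (1 - ε) / (4 * #K') * M + #C * (ε ^ 2 * (1 - ε) / (4 * #K') * #K) := by
        gcongr
        · exact hD.card_entering_le K' (List.mem_cons_of_mem _ hK') k hk
        · exact hKL K' hK' k hk
    _ = _ := by ring

/-- Tile the part `T` of `F \ D` whose `K`-translates stay in `F \ D` by the covering lemma: this
covers an `ε` proportion of `T`, and `T` is almost all of `F \ D`. -/
theorem exists_step (hh : IsSubadditiveRightSubinvariant h) (hε0 : 0 < ε) (hε1 : ε < 1)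
    (hD : IsPartialQuasiTiling h ε μ (K :: L) F D M) (hK : K.Nonempty) (hhK : h K ≤ μ * #K)
    (hKL : ∀ K' ∈ L, ∀ k ∈ K', #(leftBoundary k K) ≤ ε ^ 2 * (1 - ε) / (4 * #K') * #K)
    (hFK : ∀ k ∈ K, #(leftBoundary k F) ≤ ε ^ 2 / (4 * #K) * #F)
    (hlarge : ε * #F < #(F \ D)) :
    ∃ D' M', IsPartialQuasiTiling h ε μ L F D' M' ∧ #D + ε ^ 2 / 2 * #F ≤ #D' := by
  have hT := hD.card_centers_ge hK hFK
  obtain ⟨C, hCT, hCmass, hCcover⟩ :=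
    exists_subset_card_biUnion_ge K {s ∈ F \ D | ∀ k ∈ K, k * s ∈ F \ D} hK hε1
  have hCF : (C.biUnion fun t => K.image (· * t)) ⊆ F \ D := by
    simp only [biUnion_subset, image_subset_iff]
    exact fun t ht => (mem_filter.1 (hCT ht)).2
  refine ⟨_, _, hD.union_biUnion hh hhK hKL hCF hCmass, ?_⟩
  rw [card_union_of_disjoint (disjoint_of_subset_right hCF disjoint_sdiff)]
  push_cast
  nlinarith

theorem map_le_of_card_sdiff_le (hh : IsSubadditiveRightSubinvariant h) (hε1 : ε < 1)
    (hμ : 0 ≤ μ) (hD : IsPartialQuasiTiling h ε μ L F D M) (hsmall : #(F \ D) ≤ ε * #F) :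
    h F ≤ (μ / (1 - ε) + h {1} * ε) * #F := by
  have hMF : M ≤ #F / (1 - ε) := by
    rw [le_div_iff₀ (by linarith)]
    linarith [hD.card_ge, (Nat.cast_le (α := ℝ)).2 (card_le_card hD.subset)]
  calc h F = h (D ∪ (F \ D)) := by rw [union_sdiff_of_subset hD.subset]
    _ ≤ h D + h (F \ D) := hh.map_union_le _ _
    _ ≤ μ * M + h {1} * #(F \ D) := add_le_add hD.map_le_mul (hh.map_le_mul_card _)
    _ ≤ μ * (#F / (1 - ε)) + h {1} * (ε * #F) := by
        gcongr
        exact hh.nonneg _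
    _ = (μ / (1 - ε) + h {1} * ε) * #F := by ring

end IsPartialQuasiTiling

namespace IsTower

variable {h : Finset S → ℝ} {ε μ : ℝ} {L : List (Finset S)}

theorem exists_isPartialQuasiTiling (hh : IsSubadditiveRightSubinvariant h) (hε0 : 0 < ε)
    (hε1 : ε < 1) (hL : IsTower h ε μ L) {F D : Finset S} {M : ℝ}
    (hFL : ∀ K ∈ L, ∀ k ∈ K, #(leftBoundary k F) ≤ ε ^ 2 / (4 * #K) * #F)
    (hD : IsPartialQuasiTiling h ε μ L F D M) :
    ∃ D' M', IsPartialQuasiTiling h ε μ [] F D' M' ∧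
      (#(F \ D') ≤ ε * #F ∨ #D + L.length * (ε ^ 2 / 2) * #F ≤ #D') := by
  induction hL generalizing D M with
  | nil => exact ⟨D, M, hD, Or.inr (by simp)⟩
  | cons hK hhK hKL _ ih =>
    by_cases hsmall : #(F \ D) ≤ ε * #F
    · exact ⟨D, M, hD.nil, Or.inl hsmall⟩
    obtain ⟨D₁, M₁, hD₁, hprogress⟩ := hD.exists_step hh hε0 hε1 hK hhK hKL
      (hFL _ List.mem_cons_self) (not_le.1 hsmall)
    obtain ⟨D', M', hD', hD'F⟩ := ih (fun K hK => hFL K (List.mem_cons_of_mem _ hK)) hD₁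
    refine ⟨D', M', hD', hD'F.imp_right fun hD' => ?_⟩
    simp only [List.length_cons, Nat.cast_add, Nat.cast_one]
    linarith

theorem map_le (hh : IsSubadditiveRightSubinvariant h) (hε0 : 0 < ε) (hε1 : ε < 1)
    (hμ : 0 ≤ μ) (hL : IsTower h ε μ L) (hlen : 1 < L.length * (ε ^ 2 / 2)) {F : Finset S}
    (hFL : ∀ K ∈ L, ∀ k ∈ K, #(leftBoundary k F) ≤ ε ^ 2 / (4 * #K) * #F) :
    h F ≤ (μ / (1 - ε) + h {1} * ε) * #F := by
  obtain ⟨D, M, hD, hD'⟩ :=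
    hL.exists_isPartialQuasiTiling hh hε0 hε1 hFL (IsPartialQuasiTiling.empty hh)
  refine hD.map_le_of_card_sdiff_le hh hε1 hμ (hD'.elim id fun hlarge => ?_)
  have hDF : (#D : ℝ) ≤ #F := by exact_mod_cast card_le_card hD.subset
  have hFD : (#(F \ D) : ℝ) ≤ #F := by exact_mod_cast card_le_card sdiff_subset
  rw [card_empty, Nat.cast_zero, zero_add] at hlarge
  nlinarith

end IsTower

end OrnsteinWeiss

namespace LeftFolnerNet

open OrnsteinWeiss Topology

section Mul

variable {S : Type*} [Mul S] [DecidableEq S]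

instance atTop_neBot (N : LeftFolnerNet S) : (atTop : Filter N.I).NeBot :=
  atTop_neBot_iff.2 ⟨N.ne, N.dir⟩

theorem card_pos (N : LeftFolnerNet S) (i : N.I) : (0 : ℝ) < #(N.F i) := by
  exact_mod_cast (N.nonempty i).card_pos

theorem eventually_forall_card_leftBoundary_le (N : LeftFolnerNet S) (L : List (Finset S))
    {δ : Finset S → ℝ} (hδ : ∀ K ∈ L, 0 < δ K) :
    ∀ᶠ i in atTop, ∀ K ∈ L, ∀ k ∈ K,
      (#(leftBoundary k (N.F i)) : ℝ) ≤ δ K * #(N.F i) := by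
  refine (eventually_all_finite L.finite_toSet).2 fun K hK =>
    (eventually_all_finset K).2 fun k _ => ?_
  filter_upwards [(N.folner k).eventually_lt_const (hδ K hK)] with i hi
  exact ((div_lt_iff₀ (N.card_pos i)).1 hi).le

theorem exists_isTower (M : LeftFolnerNet S) {h : Finset S → ℝ} {ε μ : ℝ} (hε0 : 0 < ε)
    (hε1 : ε < 1) (hfreq : ∃ᶠ i in atTop, h (M.F i) ≤ μ * #(M.F i)) (n : ℕ) :
    ∃ L, IsTower h ε μ L ∧ L.length = n := by
  induction n with
  | zero => exact ⟨[], .nil, rfl⟩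
  | succ n ih =>
    obtain ⟨L, hL, hlen⟩ := ih
    have hδ : ∀ K ∈ L, 0 < ε ^ 2 * (1 - ε) / (4 * #K) := fun K hK => by
      have := (hL.nonempty_of_mem hK).card_pos
      have : 0 < 1 - ε := by linarith
      positivity
    obtain ⟨i, hhi, hi⟩ :=
      (hfreq.and_eventually (M.eventually_forall_card_leftBoundary_le L hδ)).exists
    exact ⟨M.F i :: L, .cons (M.nonempty i) hhi hi hL, by simp [hlen]⟩

theorem div_card_nonneg {h : Finset S → ℝ} (hh : IsSubadditiveRightSubinvariant h)
    (N : LeftFolnerNet S) (i : N.I) : 0 ≤ h (N.F i) / #(N.F i) :=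
  div_nonneg (hh.nonneg _) (N.card_pos i).le

theorem isBoundedUnder_ge_div_card {h : Finset S → ℝ} (hh : IsSubadditiveRightSubinvariant h)
    (N : LeftFolnerNet S) : IsBoundedUnder (· ≥ ·) atTop fun i => h (N.F i) / #(N.F i) :=
  isBoundedUnder_of ⟨0, N.div_card_nonneg hh⟩

end Mul

section Monoid

variable {S : Type*} [Monoid S] [DecidableEq S] {h : Finset S → ℝ}

theorem isBoundedUnder_le_div_card (hh : IsSubadditiveRightSubinvariant h)
    (N : LeftFolnerNet S) : IsBoundedUnder (· ≤ ·) atTop fun i => h (N.F i) / #(N.F i) :=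
  isBoundedUnder_of ⟨h {1}, fun i => (div_le_iff₀ (N.card_pos i)).2 (hh.map_le_mul_card _)⟩

theorem liminf_div_card_nonneg (hh : IsSubadditiveRightSubinvariant h) (N : LeftFolnerNet S) :
    0 ≤ liminf (fun i => h (N.F i) / #(N.F i)) atTop :=
  le_liminf_of_le (N.isBoundedUnder_le_div_card hh).isCoboundedUnder_ge
    (.of_forall (N.div_card_nonneg hh))

end Monoid

variable {S : Type*} [CancelMonoid S] [DecidableEq S] {h : Finset S → ℝ}

theorem eventually_map_le_of_frequently (hh : IsSubadditiveRightSubinvariant h)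
    (N : LeftFolnerNet S) (M : LeftFolnerNet S) {ε μ : ℝ} (hε0 : 0 < ε) (hε1 : ε < 1)
    (hμ : 0 ≤ μ) (hfreq : ∃ᶠ i in atTop, h (M.F i) ≤ μ * #(M.F i)) :
    ∀ᶠ i in atTop, h (N.F i) ≤ (μ / (1 - ε) + h {1} * ε) * #(N.F i) := by
  obtain ⟨n, hn⟩ := exists_nat_gt (2 / ε ^ 2)
  obtain ⟨L, hL, hlen⟩ := M.exists_isTower hε0 hε1 hfreq n
  have hlen' : 1 < L.length * (ε ^ 2 / 2) := by
    rw [hlen]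
    linarith [(div_lt_iff₀ (by positivity)).1 hn]
  have hδ : ∀ K ∈ L, 0 < ε ^ 2 / (4 * #K) := fun K hK => by
    have := (hL.nonempty_of_mem hK).card_pos
    positivity
  filter_upwards [N.eventually_forall_card_leftBoundary_le L hδ] with i hi
  exact hL.map_le hh hε0 hε1 hμ hlen' hi

theorem limsup_div_card_le_liminf (hh : IsSubadditiveRightSubinvariant h)
    (N : LeftFolnerNet S) (M : LeftFolnerNet S) :
    limsup (fun i => h (N.F i) / #(N.F i)) atTop ≤
      liminf (fun i => h (M.F i) / #(M.F i)) atTop := by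
  set A := liminf (fun i => h (M.F i) / #(M.F i)) atTop
  have hbound : ∀ ε ∈ Set.Ioo (0 : ℝ) 1,
      limsup (fun i => h (N.F i) / #(N.F i)) atTop ≤ (A + ε) / (1 - ε) + h {1} * ε := by
    rintro ε ⟨hε0, hε1⟩
    have hfreq : ∃ᶠ i in atTop, h (M.F i) ≤ (A + ε) * #(M.F i) :=
      (frequently_lt_of_liminf_lt (M.isBoundedUnder_le_div_card hh).isCoboundedUnder_ge
        (lt_add_of_pos_right A hε0)).mono fun i hi => ((div_lt_iff₀ (M.card_pos i)).1 hi).le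
    refine limsup_le_of_le (N.isBoundedUnder_ge_div_card hh).isCoboundedUnder_le ?_
    filter_upwards [N.eventually_map_le_of_frequently hh M hε0 hε1
      (by linarith [M.liminf_div_card_nonneg hh]) hfreq] with i hi
    exact (div_le_iff₀ (N.card_pos i)).2 hi
  have hcont : Tendsto (fun ε : ℝ => (A + ε) / (1 - ε) + h {1} * ε) (𝓝[>] 0) (𝓝 A) := by
    have : ContinuousAt (fun ε : ℝ => (A + ε) / (1 - ε) + h {1} * ε) 0 := by
      fun_prop (disch := norm_num)
    simpa using this.tendsto.mono_left nhdsWithin_le_nhds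
  exact ge_of_tendsto hcont (eventually_of_mem (Ioo_mem_nhdsGT one_pos) hbound)

theorem tendsto_div_card_liminf (hh : IsSubadditiveRightSubinvariant h) (N : LeftFolnerNet S)
    (M : LeftFolnerNet S) :
    Tendsto (fun i => h (N.F i) / #(N.F i)) atTop
      (𝓝 (liminf (fun i => h (M.F i) / #(M.F i)) atTop)) :=
  tendsto_of_le_liminf_of_limsup_le
    ((liminf_le_limsup (M.isBoundedUnder_le_div_card hh) (M.isBoundedUnder_ge_div_card hh)).trans
      (M.limsup_div_card_le_liminf hh N))
    (N.limsup_div_card_le_liminf hh M) (N.isBoundedUnder_le_div_card hh)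
    (N.isBoundedUnder_ge_div_card hh)

end LeftFolnerNet

theorem ornstein_weiss_lemma_monoid.{u, v, w} {S : Type u} [CancelMonoid S]
    [DecidableEq S]
    (hamen : Nonempty (LeftFolnerNet.{u, v} S))
    (h : Finset S → ℝ)
    (H1 : ∀ A B : Finset S, h (A ∪ B) ≤ h A + h B)
    (H2 : ∀ (s : S) (A : Finset S), h (A.image (· * s)) ≤ h A) :
    ∃ lam : ℝ, 0 ≤ lam ∧
      ∀ N : LeftFolnerNet.{u, w} S,
        Filter.Tendsto (fun i => h (N.F i) / ((N.F i).card : ℝ))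
          Filter.atTop (nhds lam) := by
  obtain ⟨M⟩ := hamen
  have hh := OrnsteinWeiss.isSubadditiveRightSubinvariant_ite H1 H2
  refine ⟨_, M.liminf_div_card_nonneg hh, fun N => ?_⟩
  have hN (i : N.I) : (if N.F i = ∅ then 0 else h (N.F i)) = h (N.F i) :=
    if_neg (N.nonempty i).ne_empty
  simpa only [hN] using N.tendsto_div_card_liminf hh M
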